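/- Let R be a tangible supertropical semiring (e·𝒯(R) = 𝒢(R)) with 𝒢(R) a cancellative monoid under multiplication, V a free R-module with base (ε_i)_{i∈I} where I = {1,…,n} and n ∈ {3,4}, and q a quadratic form on V. If x ∈ V is q-minimal with supp(x) = I, then q(x) ∈ 𝒢(R) (x is g-isotropic), and there exist subsets J, K ⊆ I with J ∪ K = I, |J| ≤ 2, |K| ≤ 2, such that x = x(J) ∨ x(K), both x(J) and x(K) are g-anisotropic and q-minimal, and e·q(x(J)) = e·q(x(K)) = e·q(x). -/

import Mathlib

/-!
Expand `q x = ∑ xᵢ xⱼ βᵢⱼ` in the base. Sums in `eR` are maxima, so `e·q(x)` is the level of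
the largest monomials. If a single monomial `p` were largest, the restriction of `x` to the at
most two indices of `p` would have the same `q`-value as `x`, contradicting minimality since
`n ≥ 3`. Hence two monomials `p ≠ p'` reach the top level, which makes `q x` ghost; their index
sets `J` and `K` cover `I`, for otherwise `x(J ∪ K) < x` would already have the value `q x`.
Within `J` the monomial `p` is then the only one at the top level, so `q(x(J))` is this monomial,
and it is tangible, since a ghost one would again give `q(x(J)) = q x`. Finally, cancellativity of
`𝒢(R)` shows that no `x' < x(J)` can keep a monomial at that level, so `x(J)` is `q`-minimal.
-/

open scoped Classical

namespace Supertrop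

section Defs

variable (R : Type*) [CommSemiring R]

/-- The distinguished element `e = 1 + 1` of a semiring. -/
def eps : R := 1 + 1

/-- `R` is a supertropical semiring: `e` is additively idempotent, and the two
supertropical addition axioms hold. -/
def IsSupertropical : Prop :=
  eps R + eps R = eps R ∧
    (∀ x y : R, eps R * x ≠ eps R * y → x + y = x ∨ x + y = y) ∧
    (∀ x y : R, eps R * x = eps R * y → x + y = eps R * y)

/-- The ghost ideal `eR`, as a subset of `R`. -/
def eSet : Set R := Set.range (fun a : R => eps R * a)

/-- The tangible elements `𝒯(R) = R \ eR`. -/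
def tangible : Set R := {x : R | x ∉ eSet R}

/-- The nonzero ghost elements `𝒢(R) = eR \ {0}`. -/
def ghost : Set R := eSet R \ {0}

end Defs

section Orders

variable {R : Type*} [CommSemiring R]

/-- The minimal ordering on an additive monoid: `x ≤ y` iff `∃ z, x + z = y`. -/
def mle {M : Type*} [AddCommMonoid M] (x y : M) : Prop := ∃ z, x + z = y

/-- Strict minimal ordering. -/
def mlt {M : Type*} [AddCommMonoid M] (x y : M) : Prop := mle x y ∧ x ≠ y

/-- The (total) ordering of the bipotent semiring `eR`: `u ≤ v ⟺ u + v = v`. -/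
def gle (u v : R) : Prop := u + v = v

/-- The strict ordering of `eR`. -/
def glt (u v : R) : Prop := gle u v ∧ u ≠ v

end Orders

section SSF

variable (R : Type*) [CommSemiring R]

/-- `R` is a supersemifield: supertropical, every tangible element is invertible in `R`,
and `𝒢(R)` is a group under multiplication with identity `e`. -/
def IsSupersemifield : Prop :=
  IsSupertropical R ∧
    (∀ t ∈ tangible R, IsUnit t) ∧
    eps R ∈ ghost R ∧
    (∀ g ∈ ghost R, ∀ h ∈ ghost R, g * h ∈ ghost R) ∧
    (∀ g ∈ ghost R, ∃ h ∈ ghost R, g * h = eps R)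

/-- The supersemifield `R` is tangible: `e·𝒯(R) = 𝒢(R)`. -/
def TangibleSSF : Prop := (fun t => eps R * t) '' tangible R = ghost R

/-- Nontriviality: `𝒢(R) ≠ {e}`. -/
def NontrivialG : Prop := ghost R ≠ {eps R}

/-- `R` is discrete: `𝒢(R)` has a smallest element `> e`. -/
def DiscreteR : Prop :=
  ∃ c ∈ ghost R, glt (eps R) c ∧ ∀ d ∈ ghost R, glt (eps R) d → gle c d

/-- `R` is dense: `𝒢(R)` has no smallest element `> e`. -/
def DenseR : Prop := ¬ DiscreteR R

/-- `eR` is a semifield: `e ≠ 0`, `𝒢(R)` is closed under multiplication, and every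
element of `𝒢(R)` is invertible in `eR` with respect to the identity `e`. -/
def GhostSemifield : Prop :=
  eps R ∈ ghost R ∧
    (∀ g ∈ ghost R, ∀ h ∈ ghost R, g * h ∈ ghost R) ∧
    (∀ g ∈ ghost R, ∃ h ∈ ghost R, g * h = eps R)

end SSF

section Quad

variable {R : Type*} [CommSemiring R] {V : Type*} [AddCommMonoid V] [Module R V]

/-- `b` is a (symmetric bilinear) companion of the quadratic form `q`. -/
def IsCompanion (q : V → R) (b : V → V → R) : Prop :=
  (∀ x y, b x y = b y x) ∧
    (∀ x y z, b (x + y) z = b x z + b y z) ∧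
    (∀ (a : R) (x y : V), b (a • x) y = a * b x y) ∧
    (∀ x y, q (x + y) = q x + q y + b x y)

/-- `(q, b)` is a quadratic pair on `V`. -/
def IsQuadPair (q : V → R) (b : V → V → R) : Prop :=
  (∀ (a : R) (x : V), q (a • x) = a ^ 2 * q x) ∧ IsCompanion q b

/-- `q` is a quadratic form on `V`. -/
def IsQuadForm (q : V → R) : Prop := ∃ b, IsQuadPair q b

/-- `q` is quasilinear (i.e. additive) on the submodule `W`. -/
def QuasilinearOn (q : V → R) (W : Submodule R V) : Prop :=
  ∀ u ∈ W, ∀ v ∈ W, q (u + v) = q u + q v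

/-- `x` is `q`-minimal: `q x' < q x` for every `x' < x` (in the minimal orderings). -/
def QMinimal (q : V → R) (x : V) : Prop := ∀ x' : V, mlt x' x → mlt (q x') (q x)

/-- The maximum of two elements of `R` with respect to the minimal ordering. -/
noncomputable def rsup (a b : R) : R := if a = b then a else a + b

/-- The componentwise maximum `x ∨ y` (in the minimal ordering) of two vectors
of a free module. -/
noncomputable def vsup {ι : Type*} (bV : Module.Basis ι R V) (x y : V) : V :=
  bV.repr.symm (Finsupp.zipWith rsup (by simp [rsup]) (bV.repr x) (bV.repr y))

/-- The restriction `x(J)` of a vector to a subset `J` of the index set of the base. -/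
noncomputable def restrict {ι : Type*} (bV : Module.Basis ι R V) (x : V) (J : Finset ι) : V :=
  ∑ i ∈ J, (bV.repr x) i • bV i

/-- The CS-ratio `CS(x,y) = e·b(x,y)² · (e·q(x)·q(y))⁻¹`, where `inv` is the
inversion of the semifield `eR`. -/
noncomputable def CSratio (q : V → R) (b : V → V → R) (inv : R → R) (x y : V) : R :=
  eps R * (b x y) ^ 2 * inv (eps R * (q x * q y))

end Quad

section Arith

variable {R : Type*} [CommSemiring R]

theorem eps_mul_eps (hR : IsSupertropical R) : eps R * eps R = eps R := by
  calc eps R * eps R = eps R + eps R := by unfold eps; ring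
    _ = eps R := hR.1

theorem eps_mul_eps_mul (hR : IsSupertropical R) (a : R) : eps R * (eps R * a) = eps R * a := by
  rw [← mul_assoc, eps_mul_eps hR]

theorem eps_mul_mul_eps_mul (hR : IsSupertropical R) (a c : R) :
    eps R * a * (eps R * c) = eps R * (a * c) := by
  rw [mul_mul_mul_comm, eps_mul_eps hR]

theorem mul_mem_eSet {a : R} (ha : a ∈ eSet R) (c : R) : a * c ∈ eSet R := by
  obtain ⟨a, rfl⟩ := ha
  exact ⟨a * c, (mul_assoc _ _ _).symm⟩

theorem mem_tangible_of_mul_left {a c : R} (h : a * c ∈ tangible R) : a ∈ tangible R :=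
  fun ha => h (mul_mem_eSet ha c)

theorem mem_tangible_of_mul_right {a c : R} (h : a * c ∈ tangible R) : c ∈ tangible R :=
  mem_tangible_of_mul_left (mul_comm a c ▸ h)

theorem ne_zero_of_mem_tangible {a : R} (ha : a ∈ tangible R) : a ≠ 0 := by
  rintro rfl
  exact ha ⟨0, mul_zero _⟩

theorem eps_mul_mem_ghost {a : R} (ha : eps R * a ≠ 0) : eps R * a ∈ ghost R :=
  ⟨⟨a, rfl⟩, ha⟩

theorem eps_mul_ne_zero (hR : IsSupertropical R) (htan : TangibleSSF R) {a : R} (ha : a ≠ 0) :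
    eps R * a ≠ 0 := by
  by_cases hae : a ∈ eSet R
  · obtain ⟨c, rfl⟩ := hae
    rwa [eps_mul_eps_mul hR]
  · have : eps R * a ∈ ghost R := htan ▸ ⟨a, hae, rfl⟩
    exact this.2

theorem eq_zero_of_add_eq_zero (hR : IsSupertropical R) (htan : TangibleSSF R) {a c : R}
    (h : a + c = 0) : a = 0 := by
  by_cases he : eps R * a = eps R * c
  · have hc : c = 0 := by
      by_contra hc
      exact eps_mul_ne_zero hR htan hc (hR.2.2 a c he ▸ h)
    rwa [hc, add_zero] at h
  · rcases hR.2.1 a c he with h' | h'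
    · rwa [h'] at h
    · have hc : c = 0 := h' ▸ h
      rwa [hc, add_zero] at h

theorem mle_mul {a a' c c' : R} (ha : mle a a') (hc : mle c c') : mle (a * c) (a' * c') := by
  obtain ⟨z, rfl⟩ := ha
  obtain ⟨w, rfl⟩ := hc
  exact ⟨a * w + z * c + z * w, by ring⟩

theorem gle_antisymm {u v : R} (h₁ : gle u v) (h₂ : gle v u) : u = v := by
  unfold gle at *; rw [← h₁, add_comm, h₂]

theorem gle_mul_right {u v : R} (h : gle u v) (s : R) : gle (u * s) (v * s) := by
  unfold gle at *; rw [← add_mul, h]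

theorem gle_mul_left {u v : R} (h : gle u v) (s : R) : gle (s * u) (s * v) := by
  unfold gle at *; rw [← mul_add, h]

theorem gle_eps_mul_of_mle (hR : IsSupertropical R) {a c : R} (h : mle a c) :
    gle (eps R * a) (eps R * c) := by
  obtain ⟨z, rfl⟩ := h
  show eps R * a + eps R * (a + z) = eps R * (a + z)
  rw [mul_add, ← add_assoc, hR.2.2 _ _ rfl, eps_mul_eps_mul hR]

theorem add_eq_right_of_gle_of_ne (hR : IsSupertropical R) {a c : R}
    (hle : gle (eps R * a) (eps R * c)) (hne : eps R * a ≠ eps R * c) : a + c = c := by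
  refine (hR.2.1 a c hne).resolve_left fun h => hne ?_
  rw [← hle, ← mul_add, h]

theorem eq_of_mle_of_eps_mul_eq (hR : IsSupertropical R) {a t : R} (ht : t ∈ tangible R)
    (hle : mle a t) (he : eps R * a = eps R * t) : a = t := by
  obtain ⟨z, rfl⟩ := hle
  have hz : eps R * a ≠ eps R * z := fun h => ht ⟨z, (hR.2.2 a z h).symm⟩
  rcases hR.2.1 a z hz with h | h
  · exact h.symm
  · rw [h] at he
    exact absurd he hz

end Arith

section Sums

open Finset

variable {R : Type*} [CommSemiring R] {α : Type*}

theorem gle_sum {s : Finset α} {f : α → R} {w : R} (h : ∀ t ∈ s, gle (f t) w) :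
    gle (∑ t ∈ s, f t) w :=
  sum_induction f (gle · w) (fun a c ha hc => by unfold gle at *; rw [add_assoc, hc, ha])
    (zero_add w) h

theorem add_eq_of_gle (hR : IsSupertropical R) {M a : R} (hM : eps R * M = M)
    (h : gle (eps R * a) M) : M + a = M := by
  by_cases he : eps R * a = M
  · rw [add_comm, hR.2.2 a M (he.trans hM.symm), hM]
  · rw [← hM] at h he
    rw [add_comm, add_eq_right_of_gle_of_ne hR h he]

theorem exists_eps_mul_eq_of_ne_zero (hR : IsSupertropical R) {s : Finset α} {F : α → R}
    (h : eps R * ∑ t ∈ s, F t ≠ 0) : ∃ t ∈ s, eps R * F t = eps R * ∑ u ∈ s, F u := by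
  classical
  induction s using Finset.induction_on with
  | empty => simp at h
  | insert a s ha ih =>
    simp only [sum_insert ha, mul_add] at h ⊢
    by_cases h0 : eps R * ∑ u ∈ s, F u = 0
    · exact ⟨a, mem_insert_self a s, by rw [h0, add_zero]⟩
    obtain ⟨t, ht, hFt⟩ := ih h0
    rw [← hFt]
    by_cases he : eps R * (eps R * F a) = eps R * (eps R * F t)
    · rw [hR.2.2 _ _ he, eps_mul_eps_mul hR]
      exact ⟨t, mem_insert_of_mem ht, rfl⟩
    · rcases hR.2.1 _ _ he with h' | h'
      · exact ⟨a, mem_insert_self a s, h'.symm⟩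
      · exact ⟨t, mem_insert_of_mem ht, h'.symm⟩

theorem gle_eps_mul_sum (hR : IsSupertropical R) {s : Finset α} (F : α → R) {t : α}
    (ht : t ∈ s) : gle (eps R * F t) (eps R * ∑ u ∈ s, F u) := by
  classical
  show _ + _ = _
  rw [← add_sum_erase s F ht, mul_add, ← add_assoc, hR.2.2 _ _ rfl, eps_mul_eps_mul hR]

theorem sum_eq_of_unique_dominant (hR : IsSupertropical R) {s : Finset α} {F : α → R} {M : R}
    (hM : M ≠ 0) (hle : ∀ t ∈ s, gle (eps R * F t) M) {p : α} (hp : p ∈ s)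
    (hpM : eps R * F p = M) (huniq : ∀ t ∈ s, eps R * F t = M → t = p) :
    ∑ t ∈ s, F t = F p := by
  classical
  rw [← add_sum_erase s F hp, add_comm]
  refine add_eq_right_of_gle_of_ne hR ?_ ?_
  · rw [mul_sum, hpM]
    exact gle_sum fun t ht => hle t (mem_of_mem_erase ht)
  · intro he
    obtain ⟨t, ht, hFt⟩ := exists_eps_mul_eq_of_ne_zero hR (he ▸ hpM ▸ hM)
    exact ne_of_mem_erase ht (huniq t (mem_of_mem_erase ht) (hFt.trans (he.trans hpM)))

theorem sum_eq_of_two_dominant (hR : IsSupertropical R) {s : Finset α} {F : α → R} {M : R}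
    (hM : eps R * M = M) (hle : ∀ t ∈ s, gle (eps R * F t) M) {p p' : α} (hp : p ∈ s)
    (hp' : p' ∈ s) (hpp' : p ≠ p') (hpM : eps R * F p = M) (hp'M : eps R * F p' = M) :
    ∑ t ∈ s, F t = M := by
  classical
  have hp'e : p' ∈ s.erase p := mem_erase.2 ⟨hpp'.symm, hp'⟩
  rw [← add_sum_erase s F hp, ← add_sum_erase _ F hp'e, ← add_assoc,
    hR.2.2 _ _ (hpM.trans hp'M.symm), hp'M, add_eq_of_gle hR hM]
  rw [mul_sum]
  exact gle_sum fun t ht => hle t (mem_of_mem_erase (mem_of_mem_erase ht))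

end Sums

section DominantTerms

open Finset

variable {R : Type*} [CommSemiring R] {ι : Type*} [Fintype ι] {F : ι × ι → R}

theorem pair_ne_univ [DecidableEq ι] (hcard : 2 < Fintype.card ι) (t : ι × ι) :
    ({t.1, t.2} : Finset ι) ≠ univ := by
  intro h
  have := card_le_two (a := t.1) (b := t.2)
  rw [h, card_univ] at this
  omega

theorem eps_mul_sum_ne_zero (hR : IsSupertropical R) (htan : TangibleSSF R) [Nonempty ι]
    (hF : ∀ J : Finset ι, J ≠ univ → ∑ t ∈ J ×ˢ J, F t ≠ ∑ t, F t) :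
    eps R * ∑ t, F t ≠ 0 :=
  eps_mul_ne_zero hR htan fun h => hF ∅ (univ_nonempty.ne_empty.symm) (by simp [h])

theorem exists_two_dominant [DecidableEq ι] (hR : IsSupertropical R) (htan : TangibleSSF R)
    (hF : ∀ J : Finset ι, J ≠ univ → ∑ t ∈ J ×ˢ J, F t ≠ ∑ t, F t)
    (hcard : 2 < Fintype.card ι) :
    ∃ p p', p ≠ p' ∧ eps R * F p = eps R * ∑ t, F t ∧ eps R * F p' = eps R * ∑ t, F t := by
  have : Nonempty ι := Fintype.card_pos_iff.1 (by omega)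
  have hM := eps_mul_sum_ne_zero hR htan hF
  obtain ⟨p, -, hp⟩ := exists_eps_mul_eq_of_ne_zero hR hM
  by_contra! h
  have huniq : ∀ t, eps R * F t = eps R * ∑ u, F u → t = p := fun t ht => by
    by_contra htp
    exact h t p htp ht hp
  apply hF _ (pair_ne_univ hcard p)
  rw [sum_eq_of_unique_dominant (F := F) hR hM (fun t _ => gle_eps_mul_sum hR F (mem_univ t))
      (by simp) hp fun t _ => huniq t,
    sum_eq_of_unique_dominant (F := F) hR hM (fun t _ => gle_eps_mul_sum hR F (mem_univ t))
      (mem_univ p) hp fun t _ => huniq t]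

theorem sum_eq_eps_mul_sum (hR : IsSupertropical R) {p p' : ι × ι} (hpp' : p ≠ p')
    (hp : eps R * F p = eps R * ∑ t, F t) (hp' : eps R * F p' = eps R * ∑ t, F t)
    (J : Finset ι) (hpJ : p ∈ J ×ˢ J) (hp'J : p' ∈ J ×ˢ J) :
    ∑ t ∈ J ×ˢ J, F t = eps R * ∑ t, F t :=
  sum_eq_of_two_dominant hR (eps_mul_eps_mul hR _) (fun t _ => gle_eps_mul_sum hR F (mem_univ t))
    hpJ hp'J hpp' hp hp'

/-- Otherwise the sum over the indices of `p` and `p'` alone would already be the full sum. -/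
theorem pair_union_pair_eq_univ [DecidableEq ι] (hR : IsSupertropical R)
    (hF : ∀ J : Finset ι, J ≠ univ → ∑ t ∈ J ×ˢ J, F t ≠ ∑ t, F t) {p p' : ι × ι}
    (hpp' : p ≠ p') (hp : eps R * F p = eps R * ∑ t, F t)
    (hp' : eps R * F p' = eps R * ∑ t, F t) :
    ({p.1, p.2} ∪ {p'.1, p'.2} : Finset ι) = univ := by
  by_contra hU
  apply hF _ hU
  rw [sum_eq_eps_mul_sum hR hpp' hp hp' _ (by simp) (by simp),
    ← sum_eq_eps_mul_sum hR hpp' hp hp' univ (by simp) (by simp), univ_product_univ]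

theorem eps_mul_ne_of_mem_pair_product [DecidableEq ι] (hR : IsSupertropical R)
    (hF : ∀ J : Finset ι, J ≠ univ → ∑ t ∈ J ×ˢ J, F t ≠ ∑ t, F t)
    (hcard : 2 < Fintype.card ι) {p t : ι × ι} (hp : eps R * F p = eps R * ∑ u, F u)
    (ht : t ∈ ({p.1, p.2} : Finset ι) ×ˢ {p.1, p.2}) (htp : t ≠ p) :
    eps R * F t ≠ eps R * ∑ u, F u := fun htM => by
  apply pair_ne_univ hcard p
  rw [← pair_union_pair_eq_univ hR hF htp htM hp, right_eq_union]
  intro i hi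
  simp only [mem_product] at ht
  rcases mem_insert.1 hi with rfl | hi
  · exact ht.1
  · exact mem_singleton.1 hi ▸ ht.2

theorem sum_pair_product_eq [DecidableEq ι] (hR : IsSupertropical R) (htan : TangibleSSF R)
    (hF : ∀ J : Finset ι, J ≠ univ → ∑ t ∈ J ×ˢ J, F t ≠ ∑ t, F t)
    (hcard : 2 < Fintype.card ι) {p : ι × ι} (hp : eps R * F p = eps R * ∑ u, F u) :
    ∑ t ∈ ({p.1, p.2} : Finset ι) ×ˢ {p.1, p.2}, F t = F p := by
  have : Nonempty ι := Fintype.card_pos_iff.1 (by omega)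
  refine sum_eq_of_unique_dominant hR (eps_mul_sum_ne_zero hR htan hF)
    (fun t _ => gle_eps_mul_sum hR F (mem_univ t)) (by simp) hp fun t ht htM => ?_
  by_contra htp
  exact eps_mul_ne_of_mem_pair_product hR hF hcard hp ht htp htM

theorem eps_mul_sum_eq_sum [DecidableEq ι] (hR : IsSupertropical R) (htan : TangibleSSF R)
    (hF : ∀ J : Finset ι, J ≠ univ → ∑ t ∈ J ×ˢ J, F t ≠ ∑ t, F t)
    (hcard : 2 < Fintype.card ι) : eps R * ∑ t, F t = ∑ t, F t := by
  obtain ⟨p, p', hpp', hp, hp'⟩ := exists_two_dominant hR htan hF hcard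
  have h := sum_eq_eps_mul_sum hR hpp' hp hp' univ (by simp) (by simp)
  rw [univ_product_univ] at h
  exact h.symm

theorem sum_mem_ghost [DecidableEq ι] (hR : IsSupertropical R) (htan : TangibleSSF R)
    (hF : ∀ J : Finset ι, J ≠ univ → ∑ t ∈ J ×ˢ J, F t ≠ ∑ t, F t)
    (hcard : 2 < Fintype.card ι) : ∑ t, F t ∈ ghost R := by
  have : Nonempty ι := Fintype.card_pos_iff.1 (by omega)
  rw [← eps_mul_sum_eq_sum hR htan hF hcard]
  exact eps_mul_mem_ghost (eps_mul_sum_ne_zero hR htan hF)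

/-- Were `F p` ghost, the sum over `{p.1, p.2}` would be the full sum. -/
theorem mem_tangible_of_dominant [DecidableEq ι] (hR : IsSupertropical R) (htan : TangibleSSF R)
    (hF : ∀ J : Finset ι, J ≠ univ → ∑ t ∈ J ×ˢ J, F t ≠ ∑ t, F t)
    (hcard : 2 < Fintype.card ι) {p : ι × ι} (hp : eps R * F p = eps R * ∑ u, F u) :
    F p ∈ tangible R := by
  rintro ⟨a, ha : eps R * a = F p⟩
  apply hF _ (pair_ne_univ hcard p)
  rw [sum_pair_product_eq hR htan hF hcard hp, ← ha, ← eps_mul_eps_mul hR, ha, hp,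
    eps_mul_sum_eq_sum hR htan hF hcard]

end DominantTerms

section Cancel

variable {R : Type*} [CommSemiring R]

theorem eps_mul_eq_of_eps_mul_mul_eq (hR : IsSupertropical R)
    (hcanc : ∀ g ∈ ghost R, ∀ a ∈ ghost R, ∀ c ∈ ghost R, g * a = g * c → a = c)
    {u u' v v' κ : R} (hu : mle u' u) (hv : mle v' v)
    (h : eps R * (u' * v' * κ) = eps R * (u * v * κ)) (h0 : eps R * (u * v * κ) ≠ 0) :
    eps R * u' = eps R * u ∧ eps R * v' = eps R * v := by
  have hsplit : ∀ a c d : R, eps R * (a * c * d) = eps R * a * (eps R * c) * (eps R * d) :=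
    fun a c d => by rw [eps_mul_mul_eps_mul hR, eps_mul_mul_eps_mul hR]
  have hG₂ : ∀ {a c : R}, eps R * a * (eps R * c) ≠ 0 → eps R * a * (eps R * c) ∈ ghost R :=
    fun hac => by rw [eps_mul_mul_eps_mul hR] at hac ⊢; exact eps_mul_mem_ghost hac
  rw [hsplit, hsplit] at h
  rw [hsplit] at h0
  have h0' := h ▸ h0
  have hK := eps_mul_mem_ghost (right_ne_zero_of_mul h0)
  have hU := eps_mul_mem_ghost (left_ne_zero_of_mul (left_ne_zero_of_mul h0))
  have hV := eps_mul_mem_ghost (right_ne_zero_of_mul (left_ne_zero_of_mul h0))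
  have hU' := eps_mul_mem_ghost (left_ne_zero_of_mul (left_ne_zero_of_mul h0'))
  have hV' := eps_mul_mem_ghost (right_ne_zero_of_mul (left_ne_zero_of_mul h0'))
  -- Cancel `e κ`; then `u'v' ≤ uv' ≤ uv` at ghost level, so all three agree.
  have hUV : eps R * u' * (eps R * v') = eps R * u * (eps R * v) :=
    hcanc _ hK _ (hG₂ (left_ne_zero_of_mul h0')) _ (hG₂ (left_ne_zero_of_mul h0))
      (by rw [mul_comm, h, mul_comm])
  have hUV' : eps R * u * (eps R * v') = eps R * u * (eps R * v) :=
    gle_antisymm (gle_mul_left (gle_eps_mul_of_mle hR hv) _)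
      (hUV ▸ gle_mul_right (gle_eps_mul_of_mle hR hu) _)
  refine ⟨hcanc _ hV' _ hU' _ hU ?_, hcanc _ hU _ hV' _ hV hUV'⟩
  rw [mul_comm, hUV, ← hUV', mul_comm]

end Cancel

section QuadraticExpansion

open Finset

variable {R : Type*} [CommSemiring R] {V : Type*} [AddCommMonoid V] [Module R V]
  {q : V → R} {b : V → V → R}

theorem IsQuadPair.map_zero (hqp : IsQuadPair q b) : q 0 = 0 := by
  simpa using hqp.1 0 0

theorem IsQuadPair.mle_map (hqp : IsQuadPair q b) {x y : V} (h : mle x y) : mle (q x) (q y) := by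
  obtain ⟨w, rfl⟩ := h
  exact ⟨q w + b x w, by rw [hqp.2.2.2.2, add_assoc]⟩

theorem IsQuadPair.companion_smul_sum {ι : Type*} (hqp : IsQuadPair q b) (a : R) (u : V)
    (s : Finset ι) (c : ι → R) (v : ι → V) :
    b (a • u) (∑ j ∈ s, c j • v j) = ∑ j ∈ s, a * c j * b u (v j) := by
  classical
  induction s using Finset.induction_on with
  | empty => rw [sum_empty, sum_empty, hqp.2.1, ← zero_smul R (0 : V), hqp.2.2.2.1, zero_mul]
  | insert i s hi ih =>
    rw [sum_insert hi, sum_insert hi, ← ih, hqp.2.1, hqp.2.2.1, hqp.2.1 (∑ j ∈ s, _),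
      hqp.2.2.2.1, hqp.2.1, hqp.2.2.2.1, hqp.2.2.2.1]
    ring

/-- The coefficient of `xᵢ xⱼ` in `q (∑ xᵢ vᵢ)`; each pair `i ≠ j` is counted once, at `j < i`. -/
def quadCoeff {ι : Type*} [LinearOrder ι] (q : V → R) (b : V → V → R) (v : ι → V)
    (t : ι × ι) : R :=
  if t.1 = t.2 then q (v t.1) else if t.2 < t.1 then b (v t.1) (v t.2) else 0

theorem IsQuadPair.map_sum_smul {ι : Type*} [LinearOrder ι] (hqp : IsQuadPair q b)
    (s : Finset ι) (c : ι → R) (v : ι → V) :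
    q (∑ i ∈ s, c i • v i) = ∑ t ∈ s ×ˢ s, c t.1 * c t.2 * quadCoeff q b v t := by
  induction s using Finset.induction_on_max with
  | empty => simp [hqp.map_zero]
  | insert a s has ih =>
    have ha : a ∉ s := fun h => lt_irrefl a (has a h)
    have hrow : ∑ j ∈ s, c a * c j * quadCoeff q b v (a, j) = ∑ j ∈ s, c a * c j * b (v a) (v j) :=
      sum_congr rfl fun j hj => by simp [quadCoeff, (has j hj).ne', has j hj]
    have hcol : ∑ i ∈ s, c i * c a * quadCoeff q b v (i, a) = 0 :=
      sum_eq_zero fun i hi => by simp [quadCoeff, (has i hi).ne, (has i hi).not_gt]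
    rw [sum_insert ha, hqp.2.2.2.2, hqp.1, ih, hqp.companion_smul_sum, ← hrow, sum_product s s,
      sum_product (insert a s), sum_insert ha, sum_insert ha]
    simp only [sum_insert ha, sum_add_distrib, hcol]
    rw [show quadCoeff q b v (a, a) = q (v a) from if_pos rfl]
    ring

end QuadraticExpansion

section Restriction

open Finset

variable {R : Type*} [CommSemiring R] {V : Type*} [AddCommMonoid V] [Module R V]
  {ι : Type*} (bV : Module.Basis ι R V)

theorem repr_restrict [DecidableEq ι] (x : V) (J : Finset ι) (i : ι) :
    bV.repr (restrict bV x J) i = if i ∈ J then bV.repr x i else 0 := by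
  simp [restrict, Finsupp.finsetSum_apply, Finsupp.single_apply]

theorem restrict_eq_self {x : V} {J : Finset ι} (h : ∀ i ∉ J, bV.repr x i = 0) :
    restrict bV x J = x := by
  classical
  refine bV.repr.injective (Finsupp.ext fun i => ?_)
  rw [repr_restrict]
  split_ifs with hi
  · rfl
  · exact (h i hi).symm

theorem restrict_univ [Fintype ι] (x : V) : restrict bV x univ = x := bV.sum_repr x

theorem mlt_restrict [Fintype ι] {x : V} (hx : ∀ i, bV.repr x i ≠ 0) {J : Finset ι}
    (hJ : J ≠ univ) : mlt (restrict bV x J) x := by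
  classical
  refine ⟨⟨restrict bV x Jᶜ, by rw [restrict, restrict, sum_add_sum_compl, bV.sum_repr]⟩,
    fun h => ?_⟩
  obtain ⟨i, hi⟩ : ∃ i, i ∉ J := by simpa [eq_univ_iff_forall] using hJ
  exact hx i (by rw [← h, repr_restrict, if_neg hi])

theorem vsup_restrict_of_union_eq_univ [Fintype ι] [DecidableEq ι] (x : V) {J K : Finset ι}
    (hJK : J ∪ K = univ) : vsup bV (restrict bV x J) (restrict bV x K) = x := by
  refine bV.repr.injective (Finsupp.ext fun i => ?_)
  have hi : i ∈ J ∪ K := hJK ▸ mem_univ i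
  rw [vsup, LinearEquiv.apply_symm_apply, Finsupp.zipWith_apply, repr_restrict, repr_restrict,
    rsup]
  rw [mem_union] at hi
  split_ifs <;> simp_all

theorem mle_repr {x y : V} (h : mle x y) (i : ι) : mle (bV.repr x i) (bV.repr y i) := by
  obtain ⟨w, rfl⟩ := h
  exact ⟨bV.repr w i, by simp⟩

theorem repr_eq_zero_of_mle (hR : IsSupertropical R) (htan : TangibleSSF R) {x y : V}
    (h : mle x y) {i : ι} (hi : bV.repr y i = 0) : bV.repr x i = 0 := by
  obtain ⟨w, rfl⟩ := h
  exact eq_zero_of_add_eq_zero hR htan (by simpa using hi)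

theorem eq_restrict_of_mle [DecidableEq ι] (hR : IsSupertropical R) (htan : TangibleSSF R)
    {x x' : V} {J : Finset ι} (h : mle x' (restrict bV x J))
    (hJ : ∀ i ∈ J, bV.repr x' i = bV.repr x i) : x' = restrict bV x J := by
  refine bV.repr.injective (Finsupp.ext fun i => ?_)
  rw [repr_restrict]
  split_ifs with hi
  · exact hJ i hi
  · exact repr_eq_zero_of_mle bV hR htan h (by rw [repr_restrict, if_neg hi])

noncomputable def quadTerm [LinearOrder ι] (q : V → R) (b : V → V → R) (x : V) (t : ι × ι) : R :=
  bV.repr x t.1 * bV.repr x t.2 * quadCoeff q b bV t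

theorem IsQuadPair.map_restrict [LinearOrder ι] {q : V → R} {b : V → V → R}
    (hqp : IsQuadPair q b) (x : V) (J : Finset ι) :
    q (restrict bV x J) = ∑ t ∈ J ×ˢ J, quadTerm bV q b x t :=
  hqp.map_sum_smul J _ _

end Restriction

section Minimality

open Finset

variable {R : Type*} [CommSemiring R] {V : Type*} [AddCommMonoid V] [Module R V]
  {ι : Type*} [LinearOrder ι] (bV : Module.Basis ι R V) {q : V → R} {b : V → V → R}

/-- If `x' < x({p.1, p.2})` had the same `q`-value, one of its monomials would reach the level
of monomial `p`; only monomial `p` of `x'` can, and cancellation in `𝒢(R)` then forces `x'` to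
agree with `x` at `p.1` and `p.2`, as those coordinates of `x` are tangible. -/
theorem qMinimal_restrict_pair (hR : IsSupertropical R) (htan : TangibleSSF R)
    (hcanc : ∀ g ∈ ghost R, ∀ a ∈ ghost R, ∀ c ∈ ghost R, g * a = g * c → a = c)
    (hqp : IsQuadPair q b) {x : V} {p : ι × ι} (htang : quadTerm bV q b x p ∈ tangible R)
    (hle : ∀ t ∈ ({p.1, p.2} : Finset ι) ×ˢ {p.1, p.2},
      gle (eps R * quadTerm bV q b x t) (eps R * quadTerm bV q b x p))
    (hne : ∀ t ∈ ({p.1, p.2} : Finset ι) ×ˢ {p.1, p.2}, t ≠ p →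
      eps R * quadTerm bV q b x t ≠ eps R * quadTerm bV q b x p) :
    QMinimal q (restrict bV x {p.1, p.2}) := by
  set P : Finset ι := {p.1, p.2}
  have hM := eps_mul_ne_zero hR htan (ne_zero_of_mem_tangible htang)
  have hqy : q (restrict bV x P) = quadTerm bV q b x p := by
    rw [hqp.map_restrict]
    exact sum_eq_of_unique_dominant hR hM hle (by simp [P]) rfl fun t ht htM => by
      by_contra htp
      exact hne t ht htp htM
  rintro x' ⟨hx'y, hne'⟩
  refine ⟨hqp.mle_map hx'y, fun hq => hne' ?_⟩
  have hcoord : ∀ i ∈ P, mle (bV.repr x' i) (bV.repr x i) := fun i hi => by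
    simpa [repr_restrict, hi] using mle_repr bV hx'y i
  have hx' : restrict bV x' P = x' := restrict_eq_self bV fun i hi =>
    repr_eq_zero_of_mle bV hR htan hx'y (by rw [repr_restrict, if_neg hi])
  have hlevel : eps R * ∑ t ∈ P ×ˢ P, quadTerm bV q b x' t = eps R * quadTerm bV q b x p := by
    rw [← hqp.map_restrict, hx', hq, hqy]
  obtain ⟨t, ht, htM⟩ := exists_eps_mul_eq_of_ne_zero hR (hlevel ▸ hM)
  rw [hlevel] at htM
  have ht₁ := hcoord t.1 (mem_product.1 ht).1
  have ht₂ := hcoord t.2 (mem_product.1 ht).2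
  have hmono : gle (eps R * quadTerm bV q b x' t) (eps R * quadTerm bV q b x t) :=
    gle_eps_mul_of_mle hR (mle_mul (mle_mul ht₁ ht₂) ⟨0, add_zero _⟩)
  obtain rfl : t = p := by
    by_contra htp
    exact hne t ht htp (gle_antisymm (hle t ht) (htM ▸ hmono))
  obtain ⟨he₁, he₂⟩ := eps_mul_eq_of_eps_mul_mul_eq hR hcanc ht₁ ht₂ htM hM
  have hc₁ : bV.repr x' t.1 = bV.repr x t.1 :=
    eq_of_mle_of_eps_mul_eq hR (mem_tangible_of_mul_left (mem_tangible_of_mul_left htang)) ht₁ he₁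
  have hc₂ : bV.repr x' t.2 = bV.repr x t.2 :=
    eq_of_mle_of_eps_mul_eq hR (mem_tangible_of_mul_right (mem_tangible_of_mul_left htang)) ht₂ he₂
  refine eq_restrict_of_mle bV hR htan hx'y fun i hi => ?_
  rcases mem_insert.1 hi with rfl | hi
  · exact hc₁
  · exact mem_singleton.1 hi ▸ hc₂

end Minimality

section FullSupport

open Finset

variable {R : Type*} [CommSemiring R] {V : Type*} [AddCommMonoid V] [Module R V]
  {ι : Type*} [Fintype ι] [LinearOrder ι] (bV : Module.Basis ι R V) {q : V → R} {b : V → V → R}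

theorem IsQuadPair.eq_sum_quadTerm (hqp : IsQuadPair q b) (x : V) :
    q x = ∑ t, quadTerm bV q b x t := by
  rw [← univ_product_univ, ← hqp.map_restrict, restrict_univ]

theorem sum_quadTerm_ne_of_qMinimal (hqp : IsQuadPair q b) {x : V} (hmin : QMinimal q x)
    (hx : ∀ i, bV.repr x i ≠ 0) (J : Finset ι) (hJ : J ≠ univ) :
    ∑ t ∈ J ×ˢ J, quadTerm bV q b x t ≠ ∑ t, quadTerm bV q b x t := by
  rw [← hqp.map_restrict, ← hqp.eq_sum_quadTerm]
  exact (hmin _ (mlt_restrict bV hx hJ)).2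

theorem restrict_pair_of_dominant (hR : IsSupertropical R) (htan : TangibleSSF R)
    (hcanc : ∀ g ∈ ghost R, ∀ a ∈ ghost R, ∀ c ∈ ghost R, g * a = g * c → a = c)
    (hqp : IsQuadPair q b) (hcard : 2 < Fintype.card ι) {x : V} (hmin : QMinimal q x)
    (hx : ∀ i, bV.repr x i ≠ 0) {p : ι × ι}
    (hp : eps R * quadTerm bV q b x p = eps R * ∑ t, quadTerm bV q b x t) :
    restrict bV x {p.1, p.2} ≠ 0 ∧ q (restrict bV x {p.1, p.2}) ∈ tangible R ∧
      QMinimal q (restrict bV x {p.1, p.2}) ∧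
      eps R * q (restrict bV x {p.1, p.2}) = eps R * q x := by
  have hF := sum_quadTerm_ne_of_qMinimal bV hqp hmin hx
  have hqp' : q (restrict bV x {p.1, p.2}) = quadTerm bV q b x p := by
    rw [hqp.map_restrict]
    exact sum_pair_product_eq hR htan hF hcard hp
  have htang := mem_tangible_of_dominant hR htan hF hcard hp
  refine ⟨fun h0 => ne_zero_of_mem_tangible htang (by rw [← hqp', h0, hqp.map_zero]),
    hqp' ▸ htang, ?_, by rw [hqp', hp, ← hqp.eq_sum_quadTerm]⟩
  exact qMinimal_restrict_pair bV hR htan hcanc hqp htang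
    (fun t _ => hp ▸ gle_eps_mul_sum hR _ (mem_univ t))
    (fun t ht htp => hp ▸ eps_mul_ne_of_mem_pair_product hR hF hcard hp ht htp)

end FullSupport

theorem stmt17_general {R : Type*} [CommSemiring R] (hR : IsSupertropical R)
    (htan : TangibleSSF R)
    (hcanc : ∀ g ∈ ghost R, ∀ a ∈ ghost R, ∀ c ∈ ghost R, g * a = g * c → a = c)
    {V : Type*} [AddCommMonoid V] [Module R V]
    (n : ℕ) (hn : n = 3 ∨ n = 4) (bV : Module.Basis (Fin n) R V)
    (q : V → R) (hq : IsQuadForm q)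
    (x : V) (hmin : QMinimal q x) (hsupp : (bV.repr x).support = Finset.univ) :
    q x ∈ ghost R ∧
    ∃ J K : Finset (Fin n), J ∪ K = Finset.univ ∧ J.card ≤ 2 ∧ K.card ≤ 2 ∧
      x = vsup bV (restrict bV x J) (restrict bV x K) ∧
      restrict bV x J ≠ 0 ∧ restrict bV x K ≠ 0 ∧
      q (restrict bV x J) ∈ tangible R ∧ q (restrict bV x K) ∈ tangible R ∧
      QMinimal q (restrict bV x J) ∧ QMinimal q (restrict bV x K) ∧
      eps R * q (restrict bV x J) = eps R * q x ∧
      eps R * q (restrict bV x K) = eps R * q x := by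
  obtain ⟨b, hqp⟩ := hq
  have hcard : 2 < Fintype.card (Fin n) := by rcases hn with rfl | rfl <;> simp
  have hx : ∀ i, bV.repr x i ≠ 0 := fun i =>
    Finsupp.mem_support_iff.1 (hsupp ▸ Finset.mem_univ i)
  have hF := sum_quadTerm_ne_of_qMinimal bV hqp hmin hx
  obtain ⟨p, p', hpp', hp, hp'⟩ := exists_two_dominant hR htan hF hcard
  have hcover := pair_union_pair_eq_univ hR hF hpp' hp hp'
  obtain ⟨hJ0, hJt, hJmin, hJe⟩ := restrict_pair_of_dominant bV hR htan hcanc hqp hcard hmin hx hp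
  obtain ⟨hK0, hKt, hKmin, hKe⟩ := restrict_pair_of_dominant bV hR htan hcanc hqp hcard hmin hx hp'
  exact ⟨hqp.eq_sum_quadTerm bV x ▸ sum_mem_ghost hR htan hF hcard, {p.1, p.2}, {p'.1, p'.2},
    hcover, Finset.card_le_two, Finset.card_le_two,
    (vsup_restrict_of_union_eq_univ bV x hcover).symm, hJ0, hK0, hJt, hKt, hJmin, hKmin, hJe, hKe⟩

/-- a `q`-minimal vector of full support in rank `3` or `4` is
`g`-isotropic and is the maximum of two `g`-anisotropic `q`-minimal vectors of
small support with the same ghost `q`-value. -/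
theorem stmt17 {R : Type*} [CommSemiring R] (hR : IsSupertropical R)
    (htan : TangibleSSF R) (hid : eps R ∈ ghost R)
    (hmul : ∀ g ∈ ghost R, ∀ h ∈ ghost R, g * h ∈ ghost R)
    (hcanc : ∀ g ∈ ghost R, ∀ a ∈ ghost R, ∀ c ∈ ghost R, g * a = g * c → a = c)
    {V : Type*} [AddCommMonoid V] [Module R V]
    (n : ℕ) (hn : n = 3 ∨ n = 4) (bV : Module.Basis (Fin n) R V)
    (q : V → R) (hq : IsQuadForm q)
    (x : V) (hmin : QMinimal q x) (hsupp : (bV.repr x).support = Finset.univ) :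
    q x ∈ ghost R ∧
    ∃ J K : Finset (Fin n), J ∪ K = Finset.univ ∧ J.card ≤ 2 ∧ K.card ≤ 2 ∧
      x = vsup bV (restrict bV x J) (restrict bV x K) ∧
      restrict bV x J ≠ 0 ∧ restrict bV x K ≠ 0 ∧
      q (restrict bV x J) ∈ tangible R ∧ q (restrict bV x K) ∈ tangible R ∧
      QMinimal q (restrict bV x J) ∧ QMinimal q (restrict bV x K) ∧
      eps R * q (restrict bV x J) = eps R * q x ∧
      eps R * q (restrict bV x K) = eps R * q x :=
  stmt17_general hR htan hcanc n hn bV q hq x hmin hsupp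

end Supertrop
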